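/- arXiv:2510.06179 — 2 statements merged into one kernel-verified Lean document; each statement's English description precedes it below -/
import Mathlib

section
/- Let F : ℝ^N × ℝ^p → ℝ^N satisfy the hypotheses of the implicit function theorem at (w₀, θ₀): F is continuously differentiable near (w₀, θ₀), F(w₀, θ₀) = 0, and D_w F(w₀, θ₀) is invertible; let φ be the implicit solution map with φ(θ₀) = w₀ and F(φ(θ), θ) = 0 near θ₀. Assume moreover that the matrix K ∈ ℝ^{N×N} representing D_w F(w₀, θ₀) is symmetric, and let ℓ : ℝ^N → ℝ be differentiable at w₀ with gradient v := ∇ℓ(w₀). Then the composite map θ ↦ ℓ(φ(θ)) is differentiable at θ₀ and its gradient equals −(D_θ F(w₀, θ₀))ᵀ ξ, where ξ ∈ ℝ^N is the unique solution of the single linear system K ξ = v. -/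
/-!
Swapping the two factors, Mathlib's implicit function theorem on a product domain provides a
strictly differentiable solution map with derivative `-(D_w F)⁻¹ ∘ D_θ F`; any solution branch
`φ` that is continuous at `θ₀` and passes through `w₀` agrees with it near `θ₀`. By the chain
rule the derivative of `ℓ ∘ φ` sends `h` to `-v ⬝ᵥ K⁻¹ (D_θ F h)`, and the symmetry of `K` turns
this into `-(ξ ⬝ᵥ D_θ F h)` since `v ⬝ᵥ K⁻¹ y = K ξ ⬝ᵥ K⁻¹ y = ξ ⬝ᵥ y`.
-/

open Matrix Filter
open scoped Topology

theorem Matrix.IsSymm.mulVec_dotProduct {n R : Type*} [Fintype n] [CommSemiring R]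
    {K : Matrix n n R} (hK : K.IsSymm) (x y : n → R) : K *ᵥ x ⬝ᵥ y = x ⬝ᵥ K *ᵥ y := by
  rw [dotProduct_mulVec, ← mulVec_transpose, hK.eq, dotProduct_comm]

theorem ContinuousLinearMap.IsInvertible.of_injective {𝕜 E : Type*} [NontriviallyNormedField 𝕜]
    [CompleteSpace 𝕜] [NormedAddCommGroup E] [NormedSpace 𝕜 E] [FiniteDimensional 𝕜 E]
    {f : E →L[𝕜] E} (hf : Function.Injective f) : f.IsInvertible :=
  ⟨(LinearEquiv.ofInjectiveEndo f.toLinearMap hf).toContinuousLinearEquiv, rfl⟩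

section Implicit

variable {𝕜 : Type*} [NontriviallyNormedField 𝕜]
  {E : Type*} [NormedAddCommGroup E] [NormedSpace 𝕜 E] [CompleteSpace E]
  {P : Type*} [NormedAddCommGroup P] [NormedSpace 𝕜 P] [CompleteSpace P]
  {G : Type*} [NormedAddCommGroup G] [NormedSpace 𝕜 G] [CompleteSpace G]

theorem HasStrictFDerivAt.hasFDerivAt_of_eventually_apply_eq {F : E × P → G}
    {F' : E × P →L[𝕜] G} {w₀ : E} {θ₀ : P} (hF : HasStrictFDerivAt F F' (w₀, θ₀))
    (hinv : (F' ∘L .inl 𝕜 E P).IsInvertible) {φ : P → E} (hφ₀ : φ θ₀ = w₀)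
    (hφc : ContinuousAt φ θ₀) (hφ : ∀ᶠ θ in 𝓝 θ₀, F (φ θ, θ) = F (w₀, θ₀)) :
    HasFDerivAt φ (-(F' ∘L .inl 𝕜 E P).inverse ∘L (F' ∘L .inr 𝕜 E P)) θ₀ := by
  let σ : P × E →L[𝕜] E × P := ContinuousLinearEquiv.prodComm 𝕜 P E
  have hFσ : HasStrictFDerivAt (F ∘ σ) (F' ∘L σ) (θ₀, w₀) := hF.comp (θ₀, w₀) σ.hasStrictFDerivAt
  have hinr : (F' ∘L σ) ∘L .inr 𝕜 P E = F' ∘L .inl 𝕜 E P := rfl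
  have hinl : (F' ∘L σ) ∘L .inl 𝕜 P E = F' ∘L .inr 𝕜 E P := rfl
  rw [← hinr] at hinv
  have hψ := hFσ.hasStrictFDerivAt_implicitFunctionOfProdDomain hinv
  rw [hinr, hinl] at hψ
  refine hψ.hasFDerivAt.congr_of_eventuallyEq ?_
  have hgraph : Tendsto (fun θ => (θ, φ θ)) (𝓝 θ₀) (𝓝 (θ₀, w₀)) := by
    simpa [ContinuousAt, hφ₀] using continuousAt_id.prodMk hφc
  filter_upwards [hgraph.eventually (hFσ.eventually_apply_eq_iff_implicitFunctionOfProdDomain hinv),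
    hφ] with θ hiff hθ
  exact (hiff.mp hθ).symm

end Implicit

/-- Vector-Jacobian-product (VJP) formula: under the implicit function theorem hypotheses at
`(w₀, θ₀)`, with the partial derivative `D_w F(w₀,θ₀)` represented by a symmetric invertible
matrix `K`, `φ` the implicit solution map, and `ℓ` differentiable at `w₀` with gradient `v`,
the map `θ ↦ ℓ (φ θ)` is differentiable at `θ₀` and its gradient is `-(D_θ F)ᵀ ξ`, where `ξ`
is the unique solution of the single linear system `K ξ = v`; i.e. its derivative acts as
`h ↦ -(ξ ⬝ᵥ D_θF(w₀,θ₀) h)`. -/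
theorem stmt_2 {N p : ℕ}
    (F : (Fin N → ℝ) × (Fin p → ℝ) → (Fin N → ℝ))
    (w₀ : Fin N → ℝ) (θ₀ : Fin p → ℝ)
    (F' : ((Fin N → ℝ) × (Fin p → ℝ)) →L[ℝ] (Fin N → ℝ))
    (hF : ContDiffAt ℝ 1 F (w₀, θ₀))
    (hF' : HasFDerivAt F F' (w₀, θ₀))
    (hF0 : F (w₀, θ₀) = 0)
    (K : Matrix (Fin N) (Fin N) ℝ)
    (hK : ∀ u : Fin N → ℝ, F' (u, 0) = K.mulVec u)
    (hKinv : IsUnit K)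
    (hKsymm : K.IsSymm)
    (φ : (Fin p → ℝ) → (Fin N → ℝ))
    (hφ₀ : φ θ₀ = w₀)
    (hφ : ∀ᶠ θ in nhds θ₀, F (φ θ, θ) = 0)
    (hφc : ContinuousAt φ θ₀)
    (ℓ : (Fin N → ℝ) → ℝ)
    (ℓ' : (Fin N → ℝ) →L[ℝ] ℝ)
    (hℓ : HasFDerivAt ℓ ℓ' w₀)
    (v : Fin N → ℝ)
    (hv : ∀ u : Fin N → ℝ, ℓ' u = v ⬝ᵥ u) :
    (∃! ξ : Fin N → ℝ, K.mulVec ξ = v) ∧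
      ∀ ξ : Fin N → ℝ, K.mulVec ξ = v →
        ∃ L : (Fin p → ℝ) →L[ℝ] ℝ,
          HasFDerivAt (fun θ => ℓ (φ θ)) L θ₀ ∧
          ∀ h : Fin p → ℝ, L h = -(ξ ⬝ᵥ F' (0, h)) := by
  have hKbij : Function.Bijective K.mulVec :=
    ⟨mulVec_injective_iff_isUnit.mpr hKinv, mulVec_surjective_iff_isUnit.mpr hKinv⟩
  refine ⟨hKbij.existsUnique v, fun ξ hξ => ?_⟩
  set A := F' ∘L .inl ℝ (Fin N → ℝ) (Fin p → ℝ)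
  have hA : ⇑A = K.mulVec := funext hK
  have hAinv : A.IsInvertible := .of_injective (hA ▸ hKbij.injective)
  have hφ' := (hF.hasStrictFDerivAt' hF' one_ne_zero).hasFDerivAt_of_eventually_apply_eq hAinv
    hφ₀ hφc (by simpa only [hF0] using hφ)
  refine ⟨ℓ' ∘L _, (hφ₀ ▸ hℓ).comp θ₀ hφ', fun h => ?_⟩
  set u := A.inverse (F' (0, h))
  calc ℓ' (-u) = K *ᵥ ξ ⬝ᵥ -u := by rw [hv, hξ]
    _ = ξ ⬝ᵥ -A u := by rw [hKsymm.mulVec_dotProduct, hA, mulVec_neg]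
    _ = -(ξ ⬝ᵥ F' (0, h)) := by rw [hAinv.self_apply_inverse, dotProduct_neg]
end

section
/- Let G be an n×n real symmetric positive definite matrix and let H be an m×n real matrix of full row rank (rank H = m). Then the KKT matrix K = [[G, Hᵀ], [H, 0]] is invertible. -/
open Matrix
open scoped ComplexOrder

/-! Since `G` is invertible, the KKT matrix is invertible iff its Schur complement
`-(H G⁻¹ Hᴴ)` is. As `G⁻¹` is positive definite and the rows of `H` are linearly independent,
`H G⁻¹ Hᴴ` is positive definite, hence invertible. -/

namespace Matrix

theorem linearIndependent_row_of_rank_eq_card {R : Type*} [Field R] {m n : Type*} [Fintype m]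
    [Fintype n] {M : Matrix m n R} (hM : M.rank = Fintype.card m) : LinearIndependent R M.row := by
  rw [linearIndependent_iff_card_eq_finrank_span, ← hM, rank_eq_finrank_span_row, Set.finrank]

theorem isUnit_fromBlocks_conjTranspose_zero {𝕜 : Type*} [RCLike 𝕜] {n m : Type*} [Fintype n]
    [Fintype m] [DecidableEq n] [DecidableEq m] {G : Matrix n n 𝕜} {H : Matrix m n 𝕜}
    (hG : G.PosDef) (hH : Function.Injective H.vecMul) : IsUnit (fromBlocks G Hᴴ H 0) := by
  let _ := hG.isUnit.invertible
  rw [isUnit_fromBlocks_iff_of_invertible₁₁, invOf_eq_nonsing_inv, zero_sub, IsUnit.neg_iff]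
  exact (hG.inv.mul_mul_conjTranspose_same hH).isUnit

end Matrix

/-- If `G` is symmetric positive definite and `H` has full row rank, then the KKT matrix
`[[G, Hᵀ], [H, 0]]` is invertible. -/
theorem stmt_3 {n m : ℕ} (G : Matrix (Fin n) (Fin n) ℝ) (H : Matrix (Fin m) (Fin n) ℝ)
    (hG : G.PosDef) (hH : H.rank = m) :
    IsUnit (Matrix.fromBlocks G Hᵀ H 0) := by
  have hrows : LinearIndependent ℝ H.row :=
    linearIndependent_row_of_rank_eq_card (by rw [hH, Fintype.card_fin])
  simpa only [conjTranspose_eq_transpose_of_trivial] using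
    isUnit_fromBlocks_conjTranspose_zero hG (vecMul_injective_iff.mpr hrows)
end
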